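/- Let X be a second-countable locally compact Hausdorff space, metrized by a metric d inducing its topology, such that every compact subspace of X has topological dimension at most n ∈ ℕ. Let ∅ ≠ C ⊆ X be compact and let ε > 0. Then for every continuous f: X → ℝ^{2n+1} and every r with 0 < r < 1 there exists a continuous g: X → ℝ^{2n+1} with ρ(f,g) ≤ r and Δ(g,C) < ε. (I.e. U_ε(C) is dense in C(X,ℝ^{2n+1}) in the metric ρ.) -/

import Mathlib

/-!
Cover `X` by the open sets `U c` of points `x` with `‖f x - f c‖ < r / 2` and `d(x, c) < ε / 4`.
Since every compact subset has dimension at most `n` and `X` is σ-compact, this cover has an open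
shrinking of order at most `n`, obtained by repairing the order on the compact pieces of an
exhaustion one at a time while leaving the earlier pieces untouched. Take a partition of unity
`ρ` subordinate to it and put `g x = ∑ ρ_c(x) q_c`, with vertices `q_c` within `r / 2` of `f c`
and in general position in `ℝ^{2n+1}`. Then `g` is `r`-close to `f` by convexity. If `g x = g y`,
at most `2n + 2` vertices are involved and they are affinely independent, so `ρ(x) = ρ(y)`:
`x` and `y` lie in a common `U c`, hence `d(x, y) < ε / 2`.
-/

open scoped ENNReal

/-- A family `𝒜` of subsets of `X` has order at most `m`: no point of `X` lies in more
than `m + 1` distinct elements of `𝒜`. -/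
def OrderAtMost {X : Type*} (𝒜 : Set (Set X)) (m : ℕ) : Prop :=
  ∀ (x : X) (𝒮 : Finset (Set X)), (∀ A ∈ 𝒮, A ∈ 𝒜 ∧ x ∈ A) → 𝒮.card ≤ m + 1

/-- The topological (covering) dimension of `X` is at most `m`: every open cover of `X`
possesses an open refinement (an open cover each of whose members is contained in some
member of the original cover) of order at most `m`. -/
def TopDimLE (X : Type*) [TopologicalSpace X] (m : ℕ) : Prop :=
  ∀ 𝒰 : Set (Set X), (∀ U ∈ 𝒰, IsOpen U) → ⋃₀ 𝒰 = Set.univ →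
    ∃ 𝒱 : Set (Set X), (∀ V ∈ 𝒱, IsOpen V) ∧ ⋃₀ 𝒱 = Set.univ ∧
      (∀ V ∈ 𝒱, ∃ U ∈ 𝒰, V ⊆ U) ∧ OrderAtMost 𝒱 m

/-- The supremum metric `ρ(f,g) = sup_{x ∈ X} min (1, ‖f x - g x‖_∞)` on `C(X, ℝ^N)`
(the norm on `Fin N → ℝ` is the supremum norm). -/
noncomputable def rho {X : Type*} {N : ℕ} (f g : X → Fin N → ℝ) : ℝ :=
  ⨆ x : X, min 1 ‖f x - g x‖

/-- `Δ(f, C) = sup_{z ∈ f(C)} diam f⁻¹({z})`: the supremum, over points `z` of the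
image of `C`, of the diameter of the fibre of `f` over `z`. -/
noncomputable def Delta {X : Type*} [MetricSpace X] {N : ℕ} (f : X → Fin N → ℝ)
    (C : Set X) : ℝ≥0∞ :=
  ⨆ z ∈ f '' C, EMetric.diam (f ⁻¹' {z})

open Set Function Metric Finset Module

theorem exists_seq_of_forall_exists_succ {α : Type*} {P : ℕ → α → Prop}
    {R : ℕ → α → α → Prop} {a₀ : α} (h₀ : P 0 a₀)
    (h : ∀ m a, P m a → ∃ b, P (m + 1) b ∧ R m a b) :
    ∃ u : ℕ → α, u 0 = a₀ ∧ (∀ m, P m (u m)) ∧ ∀ m, R m (u m) (u (m + 1)) := by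
  choose next hnextP hnextR using h
  let v : ∀ m, {a // P m a} := fun m =>
    Nat.rec ⟨a₀, h₀⟩ (fun m a => ⟨next m a a.2, hnextP m a a.2⟩) m
  exact ⟨fun m => (v m).1, rfl, fun m => (v m).2, fun m => hnextR m _ (v m).2⟩

theorem affineIndependent_of_notMem_affineSpan_erase {k V P ι : Type*} [DivisionRing k]
    [AddCommGroup V] [Module k V] [AddTorsor V P] [DecidableEq ι] {p : ι → P} {s : Finset ι}
    {i : ι} (hi : i ∈ s) (hs : AffineIndependent k fun j : s.erase i => p j)
    (hp : p i ∉ affineSpan k (p '' ↑(s.erase i))) : AffineIndependent k fun j : s => p j := by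
  let e : {j : s // j ≠ ⟨i, hi⟩} ↪ s.erase i :=
    ⟨fun j => ⟨j.1, mem_erase.2 ⟨fun h => j.2 (Subtype.ext h), j.1.2⟩⟩,
      fun a b h => Subtype.ext <| Subtype.ext <| by simpa using congrArg Subtype.val h⟩
  refine (hs.comp_embedding e).affineIndependent_of_notMem_span fun hmem => hp ?_
  refine affineSpan_mono k ?_ hmem
  rintro _ ⟨j, hj, rfl⟩
  exact ⟨j, mem_erase.2 ⟨fun h => hj (Subtype.ext h), j.2⟩, rfl⟩

section GeneralPosition

variable {E : Type*} [NormedAddCommGroup E] [NormedSpace ℝ E]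

def InGeneralPositionOn {ι : Type*} (q : ι → E) (S : Set ι) : Prop :=
  ∀ s : Finset ι, ↑s ⊆ S → #s ≤ finrank ℝ E + 1 → AffineIndependent ℝ fun i : s => q i

theorem affineSpan_image_ne_top_of_card_le {ι : Type*} (q : ι → E) {t : Finset ι}
    (ht : #t ≤ finrank ℝ E) : affineSpan ℝ (q '' t) ≠ ⊤ := by
  classical
  intro htop
  rcases t.eq_empty_or_nonempty with rfl | hne
  · simp at htop
  · have hpos := hne.card_pos
    have h := finrank_vectorSpan_image_finset_le ℝ q t (n := #t - 1) (by omega)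
    rw [Finset.coe_image, ← direction_affineSpan, htop, AffineSubspace.direction_top,
      finrank_top] at h
    omega

theorem exists_mem_ball_forall_notMem_affineSubspace [FiniteDimensional ℝ E] {κ : Type*}
    [Countable κ] (A : κ → AffineSubspace ℝ E) (hA : ∀ k, A k ≠ ⊤) (c : E) {δ : ℝ} (hδ : 0 < δ) :
    ∃ p ∈ ball c δ, ∀ k, p ∉ A k := by
  borelize E
  let μ : MeasureTheory.Measure E := MeasureTheory.Measure.addHaar
  have hnull : μ (⋃ k, (A k : Set E)) = 0 :=
    MeasureTheory.measure_iUnion_null fun k => μ.addHaar_affineSubspace _ (hA k)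
  have hpos : μ (ball c δ \ ⋃ k, (A k : Set E)) ≠ 0 := by
    rw [MeasureTheory.measure_sdiff_null hnull]
    exact (measure_ball_pos μ c hδ).ne'
  obtain ⟨p, hp, hpA⟩ := MeasureTheory.nonempty_of_measure_ne_zero hpos
  exact ⟨p, hp, fun k hk => hpA (mem_iUnion.2 ⟨k, hk⟩)⟩

theorem InGeneralPositionOn.update_of_notMem {a : ℕ → E} {m : ℕ}
    (ha : InGeneralPositionOn a (Set.Iio m)) {p : E}
    (hp : ∀ t : Finset ℕ, ↑t ⊆ Set.Iio m → #t ≤ finrank ℝ E → p ∉ affineSpan ℝ (a '' t)) :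
    InGeneralPositionOn (update a m p) (Set.Iio (m + 1)) := by
  intro s hs hcard
  have hlt : ∀ j ∈ s, j ≠ m → j < m := fun j hj hjm =>
    lt_of_le_of_ne (Nat.lt_succ_iff.1 (hs hj)) hjm
  by_cases hm : m ∈ s
  · have hsub : ↑(s.erase m) ⊆ Set.Iio m := fun j hj =>
      hlt j (mem_of_mem_erase hj) (ne_of_mem_erase hj)
    have heq : EqOn (update a m p) a ↑(s.erase m) := fun j hj =>
      update_of_ne (ne_of_mem_erase hj) _ _
    refine affineIndependent_of_notMem_affineSpan_erase hm ?_ ?_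
    · rw [show (fun j : s.erase m => update a m p j) = fun j : s.erase m => a j from
        funext fun j => heq j.2]
      exact ha _ hsub ((card_erase_le).trans hcard)
    · rw [update_self, heq.image_eq]
      exact hp _ hsub (by rw [card_erase_of_mem hm]; omega)
  · convert ha s (fun j hj => hlt j hj (ne_of_mem_of_not_mem hj hm)) hcard using 1
    funext j
    exact update_of_ne (ne_of_mem_of_not_mem j.2 hm) _ _

theorem exists_inGeneralPositionOn_dist_lt_nat [FiniteDimensional ℝ E] (c : ℕ → E) {δ : ℝ}
    (hδ : 0 < δ) :
    ∃ q : ℕ → E, (∀ m, dist (q m) (c m) < δ) ∧ InGeneralPositionOn q univ := by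
  -- `u m` holds the first `m` points; the next one avoids the (null) affine spans of at most
  -- `finrank ℝ E` of them.
  obtain ⟨u, -, hu, hu_succ⟩ := exists_seq_of_forall_exists_succ
    (P := fun m a => (∀ k < m, dist (a k) (c k) < δ) ∧ InGeneralPositionOn a (Set.Iio m))
    (R := fun m a b => ∀ k < m, b k = a k) (a₀ := 0)
    ⟨fun k hk => absurd hk k.not_lt_zero, fun s hs _ => by
      obtain rfl : s = ∅ := by simpa using hs
      exact affineIndependent_of_subsingleton ℝ _⟩
    (fun m a ⟨hclose, hgen⟩ => by
      obtain ⟨p, hp, hpA⟩ := exists_mem_ball_forall_notMem_affineSubspace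
        (κ := {t : Finset ℕ // ↑t ⊆ Set.Iio m ∧ #t ≤ finrank ℝ E})
        (fun t => affineSpan ℝ (a '' t)) (fun t => affineSpan_image_ne_top_of_card_le a t.2.2)
        (c m) hδ
      refine ⟨update a m p,
        ⟨fun k hk => ?_, hgen.update_of_notMem fun t h1 h2 => hpA ⟨t, h1, h2⟩⟩,
        fun k hk => update_of_ne hk.ne _ _⟩
      rcases (Nat.lt_succ_iff.1 hk).lt_or_eq with hk | rfl
      · rw [update_of_ne hk.ne]
        exact hclose k hk
      · rw [update_self]
        exact hp)
  have hstab : ∀ m, ∀ k < m, u m k = u (k + 1) k := by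
    intro m
    induction m with
    | zero => exact fun k hk => absurd hk k.not_lt_zero
    | succ m ih =>
      intro k hk
      rcases (Nat.lt_succ_iff.1 hk).lt_or_eq with hk | rfl
      · rw [hu_succ m k hk, ih k hk]
      · rfl
  refine ⟨fun k => u (k + 1) k, fun k => (hu (k + 1)).1 k k.lt_succ_self, fun s _ hs => ?_⟩
  obtain ⟨m, hm⟩ := s.exists_nat_subset_range
  have hsub : ↑s ⊆ Set.Iio m := by rw [← coe_range]; exact_mod_cast hm
  convert (hu m).2 s hsub hs using 1
  funext j
  exact (hstab m j (mem_range.1 (hm j.2))).symm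

theorem exists_inGeneralPositionOn_dist_lt [FiniteDimensional ℝ E] {ι : Type*} [Countable ι]
    (c : ι → E) {δ : ℝ} (hδ : 0 < δ) :
    ∃ q : ι → E, (∀ i, dist (q i) (c i) < δ) ∧ InGeneralPositionOn q univ := by
  obtain ⟨e, he⟩ := Countable.exists_injective_nat ι
  obtain ⟨q, hqc, hq⟩ := exists_inGeneralPositionOn_dist_lt_nat (extend e c 0) hδ
  refine ⟨q ∘ e, fun i => by simpa [he.extend_apply] using hqc (e i), fun s _ hs => ?_⟩
  have := hq (s.map ⟨e, he⟩) (subset_univ _) (by rwa [card_map])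
  exact this.comp_embedding ⟨fun j : s => ⟨e j, mem_map_of_mem ⟨e, he⟩ j.2⟩,
    fun a b h => Subtype.ext (he (congrArg Subtype.val h))⟩

end GeneralPosition

section Dimension

variable {ι X : Type*} {n : ℕ}

def OrderLEOn (V : ι → Set X) (A : Set X) (n : ℕ) : Prop :=
  ∀ x ∈ A, ∀ s : Finset ι, (∀ i ∈ s, x ∈ V i) → #s ≤ n + 1

theorem OrderLEOn.mono {V W : ι → Set X} {A B : Set X} (hV : OrderLEOn V A n)
    (hWV : ∀ i, W i ⊆ V i) (hBA : B ⊆ A) : OrderLEOn W B n :=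
  fun x hx s hs => hV x (hBA hx) s fun i hi => hWV i (hs i hi)

variable [TopologicalSpace X]

theorem TopDimLE.exists_shrink_orderLEOn (hX : TopDimLE X n) {U : ι → Set X}
    (hUo : ∀ i, IsOpen (U i)) (hU : ⋃ i, U i = univ) :
    ∃ V : ι → Set X, (∀ i, IsOpen (V i)) ∧ ⋃ i, V i = univ ∧ (∀ i, V i ⊆ U i) ∧
      OrderLEOn V univ n := by
  classical
  obtain ⟨𝒱, h𝒱o, h𝒱, href, hord⟩ :=
    hX (range U) (forall_mem_range.2 hUo) (sUnion_range U ▸ hU)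
  have hidx : ∀ V : 𝒱, ∃ i, V.1 ⊆ U i := fun V => by
    obtain ⟨_, ⟨i, rfl⟩, h⟩ := href V.1 V.2
    exact ⟨i, h⟩
  choose j hj using hidx
  refine ⟨fun i => ⋃ (V : 𝒱) (_ : j V = i), V.1,
    fun i => isOpen_iUnion fun V => isOpen_iUnion fun _ => h𝒱o _ V.2,
    eq_univ_of_forall fun x => ?_, fun i => iUnion₂_subset fun V h => h ▸ hj V, ?_⟩
  · obtain ⟨V, hV, hx⟩ := h𝒱 ▸ mem_univ x
    exact mem_iUnion.2 ⟨j ⟨V, hV⟩, mem_iUnion₂.2 ⟨⟨V, hV⟩, rfl, hx⟩⟩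
  · intro x _ s hs
    have hW : ∀ i ∈ s, ∃ V : 𝒱, j V = i ∧ x ∈ V.1 := fun i hi => by
      simpa using hs i hi
    choose W hWj hWx using hW
    have hinj : Injective fun i : s => (W i.1 i.2).1 := fun a b hab => by
      rw [Subtype.ext_iff, ← hWj a.1 a.2, ← hWj b.1 b.2, Subtype.ext hab]
    calc #s = #(s.attach.image fun i => (W i.1 i.2).1) := by
          rw [card_image_of_injective _ hinj, card_attach]
      _ ≤ n + 1 := hord x _ fun A hA => by
          obtain ⟨i, -, rfl⟩ := mem_image.1 hA
          exact ⟨(W i.1 i.2).2, hWx i.1 i.2⟩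

theorem TopDimLE.exists_open_orderLEOn {L : Set X} (hL : TopDimLE L n) {W : ι → Set X}
    (hWo : ∀ i, IsOpen (W i)) (hLW : L ⊆ ⋃ i, W i) :
    ∃ G : ι → Set X, (∀ i, IsOpen (G i)) ∧ (∀ i, G i ⊆ W i) ∧ L ⊆ ⋃ i, G i ∧
      OrderLEOn G L n := by
  obtain ⟨V, hVo, hV, hVW, hVord⟩ := hL.exists_shrink_orderLEOn (U := fun i => (↑) ⁻¹' W i)
    (fun i => (hWo i).preimage continuous_subtype_val)
    (eq_univ_of_forall fun x => by simpa using hLW x.2)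
  choose O hOo hOV using fun i => isOpen_induced_iff.1 (hVo i)
  have hmem : ∀ {x} (hx : x ∈ L) i, x ∈ O i ↔ (⟨x, hx⟩ : L) ∈ V i := fun hx i => by
    rw [← hOV i]; rfl
  refine ⟨fun i => O i ∩ W i, fun i => (hOo i).inter (hWo i), fun i => inter_subset_right,
    fun x hx => ?_, fun x hx s hs =>
      hVord ⟨x, hx⟩ trivial s fun i hi => (hmem hx i).1 (hs i hi).1⟩
  obtain ⟨i, hi⟩ := mem_iUnion.1 (hV ▸ mem_univ (⟨x, hx⟩ : L))
  exact mem_iUnion.2 ⟨i, (hmem hx i).2 hi, hVW i hi⟩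

variable [T2Space X] [LocallyCompactSpace X]

-- Only a compact `L` with `D \ O ⊆ interior L` and `L ∩ F = ∅` is changed: there `V` is replaced
-- by a refinement of order at most `n`, which exists since `dim L ≤ n`.
theorem exists_shrink_extend_orderLEOn (hdim : ∀ K : Set X, IsCompact K → TopDimLE K n)
    {V : ι → Set X} (hVo : ∀ i, IsOpen (V i)) (hV : ⋃ i, V i = univ) {D O F : Set X}
    (hD : IsCompact D) (hO : IsOpen O) (hF : IsClosed F) (hDOF : Disjoint F (D \ O))
    (hVO : OrderLEOn V O n) :
    ∃ V' : ι → Set X, (∀ i, IsOpen (V' i)) ∧ ⋃ i, V' i = univ ∧ (∀ i, V' i ⊆ V i) ∧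
      (∀ i, V i ∩ F ⊆ V' i) ∧ OrderLEOn V' D n := by
  obtain ⟨L, hL, hDL, hLF⟩ :=
    exists_compact_between (hD.diff hO) hF.isOpen_compl (subset_compl_iff_disjoint_left.2 hDOF)
  obtain ⟨G, hGo, hGV, hLG, hGord⟩ := (hdim L hL).exists_open_orderLEOn (W := fun i => V i \ F)
    (fun i => (hVo i).sdiff hF) fun x hx => by
      obtain ⟨i, hi⟩ := mem_iUnion.1 (hV ▸ mem_univ x)
      exact mem_iUnion.2 ⟨i, hi, hLF hx⟩
  refine ⟨fun i => (V i \ L) ∪ G i, fun i => ((hVo i).sdiff hL.isClosed).union (hGo i),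
    eq_univ_of_forall fun x => ?_, fun i => union_subset sdiff_subset ((hGV i).trans sdiff_subset),
    fun i x hx => Or.inl ⟨hx.1, fun hxL => hLF hxL hx.2⟩, fun x hx s hs => ?_⟩
  · by_cases hxL : x ∈ L
    · obtain ⟨i, hi⟩ := mem_iUnion.1 (hLG hxL)
      exact mem_iUnion.2 ⟨i, Or.inr hi⟩
    · obtain ⟨i, hi⟩ := mem_iUnion.1 (hV ▸ mem_univ x)
      exact mem_iUnion.2 ⟨i, Or.inl ⟨hi, hxL⟩⟩
  · by_cases hxL : x ∈ L
    · exact hGord x hxL s fun i hi => (hs i hi).resolve_left fun h => h.2 hxL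
    · have hxO : x ∈ O := by_contra fun hxO => hxL (interior_subset (hDL ⟨hx, hxO⟩))
      exact hVO x hxO s fun i hi => (hs i hi).elim (·.1) fun h => ((hGV i) h).1

theorem exists_shrink_orderLEOn_univ [SigmaCompactSpace X]
    (hdim : ∀ K : Set X, IsCompact K → TopDimLE K n) {U : ι → Set X}
    (hUo : ∀ i, IsOpen (U i)) (hU : ⋃ i, U i = univ) :
    ∃ V : ι → Set X, (∀ i, IsOpen (V i)) ∧ ⋃ i, V i = univ ∧ (∀ i, V i ⊆ U i) ∧
      OrderLEOn V univ n := by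
  -- Two empty initial terms make the order condition on `K 1` vacuous for the initial cover `U`.
  let K := (CompactExhaustion.choice X).shiftr.shiftr
  obtain ⟨W, rfl, hW, hW_succ⟩ := exists_seq_of_forall_exists_succ
    (P := fun m (V : ι → Set X) =>
      (∀ i, IsOpen (V i)) ∧ ⋃ i, V i = Set.univ ∧ OrderLEOn V (K (m + 1)) n)
    (R := fun m (V V' : ι → Set X) => (∀ i, V' i ⊆ V i) ∧ ∀ i, V i ∩ K m ⊆ V' i) (a₀ := U)
    ⟨hUo, hU, fun x hx => absurd hx (notMem_empty x)⟩ fun m V ⟨hVo, hV, hVord⟩ => by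
      obtain ⟨V', hV'o, hV', hV'V, hVV', hV'ord⟩ := exists_shrink_extend_orderLEOn hdim hVo hV
        (K.isCompact (m + 2)) isOpen_interior (K.isCompact m).isClosed
        (disjoint_sdiff_right.mono_left (K.subset_interior_succ m))
        (hVord.mono (fun _ => subset_rfl) interior_subset)
      exact ⟨V', ⟨hV'o, hV', hV'ord⟩, hV'V, hVV'⟩
  have hanti : Antitone W := antitone_nat_of_succ_le fun m i => (hW_succ m).1 i
  have hstab : ∀ {p m i x}, p ≤ m → x ∈ K p → x ∈ W p i → x ∈ W m i := by
    intro p m i x hpm hxK hxW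
    induction m, hpm using Nat.le_induction with
    | base => exact hxW
    | succ m hpm ih => exact (hW_succ m).2 i ⟨ih, K.subset hpm hxK⟩
  -- On `K p` the covers `W m` no longer change from `m = p` on; the limit uses `W p` on
  -- `interior (K p)`.
  refine ⟨fun i => ⋃ p, W p i ∩ interior (K p),
    fun i => isOpen_iUnion fun p => ((hW p).1 i).inter isOpen_interior,
    eq_univ_of_forall fun x => ?_, fun i => iUnion_subset fun p => inter_subset_left.trans
      (hanti p.zero_le i), fun x _ s hs => ?_⟩
  · obtain ⟨p, hp⟩ := K.exists_mem x
    obtain ⟨i, hi⟩ := mem_iUnion.1 ((hW (p + 1)).2.1 ▸ mem_univ x)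
    exact mem_iUnion.2 ⟨i, mem_iUnion.2 ⟨p + 1, hi, K.subset_interior_succ p hp⟩⟩
  · obtain ⟨p, hp⟩ := K.exists_mem x
    refine (hW p).2.2 x (K.subset p.le_succ hp) s fun i hi => ?_
    obtain ⟨p', hxW, hxK⟩ := mem_iUnion.1 (hs i hi)
    rcases le_total p p' with h | h
    · exact hanti h i hxW
    · exact hstab h (interior_subset hxK) hxW

end Dimension

theorem PartitionOfUnity.exists_ne_zero_of_finsum_smul_eq {ι X E : Type*} [TopologicalSpace X]
    [NormedAddCommGroup E] [NormedSpace ℝ E] {n : ℕ} {ρ : PartitionOfUnity ι X univ}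
    {q : ι → E} (hq : InGeneralPositionOn q univ)
    (hρ : OrderLEOn (fun i => support (ρ i)) univ n) (hn : 2 * n + 1 ≤ finrank ℝ E) {x y : X}
    (hxy : ∑ᶠ i, ρ i x • q i = ∑ᶠ i, ρ i y • q i) : ∃ i, ρ i x ≠ 0 ∧ ρ i y ≠ 0 := by
  classical
  set I := ρ.finsupport x ∪ ρ.finsupport y
  have hcard : ∀ z, #(ρ.finsupport z) ≤ n + 1 := fun z =>
    hρ z trivial _ fun i hi => (ρ.mem_finsupport z).1 hi
  have hI : #I ≤ finrank ℝ E + 1 :=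
    (card_union_le (ρ.finsupport x) (ρ.finsupport y)).trans
      (by have := hcard x; have := hcard y; omega)
  have hsum : ∀ z, ρ.finsupport z ⊆ I →
      ∑ i : I, ρ i z = 1 ∧ ∑ i : I, ρ i z • q i = ∑ᶠ i, ρ i z • q i := fun z hz => by
    refine ⟨by rw [sum_coe_sort I fun i => ρ i z]; exact ρ.sum_finsupport' (mem_univ z) hz, ?_⟩
    rw [sum_coe_sort I fun i => ρ i z • q i, finsum_eq_sum_of_support_subset]
    exact (support_smul_subset_left _ _).trans ((ρ.coe_finsupport z).symm ▸ coe_subset.2 hz)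
  obtain ⟨hx1, hxq⟩ := hsum x subset_union_left
  obtain ⟨hy1, hyq⟩ := hsum y subset_union_right
  have heq := (hq I (subset_univ _) hI).eq_of_sum_eq_sum (s := Finset.univ)
    (w₁ := fun i : I => ρ i x) (w₂ := fun i : I => ρ i y) (hx1.trans hy1.symm)
    (hxq.trans (hxy.trans hyq.symm))
  obtain ⟨i, hi⟩ := nonempty_of_sum_ne_zero ((ρ.sum_finsupport (mem_univ x)).symm ▸ one_ne_zero)
  have hρi : ρ i x ≠ 0 := (ρ.mem_finsupport x).1 hi
  exact ⟨i, hρi, heq ⟨i, mem_union_left _ hi⟩ (mem_univ _) ▸ hρi⟩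

theorem rho_le_of_forall_dist_le {X : Type*} {N : ℕ} {f g : X → Fin N → ℝ} {r : ℝ} (hr : 0 ≤ r)
    (h : ∀ x, dist (f x) (g x) ≤ r) : rho f g ≤ r :=
  Real.iSup_le (fun x => (min_le_right _ _).trans ((dist_eq_norm _ _).ge.trans (h x))) hr

theorem Delta_le_of_forall_dist_le {X : Type*} [MetricSpace X] {N : ℕ} {g : X → Fin N → ℝ}
    (C : Set X) {δ : ℝ} (h : ∀ x y, g x = g y → dist x y ≤ δ) : Delta g C ≤ ENNReal.ofReal δ :=
  iSup₂_le fun _ _ => Metric.ediam_le fun x hx y hy =>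
    (edist_dist x y).le.trans (ENNReal.ofReal_le_ofReal (h x y (hx.trans hy.symm)))

theorem statement14_general (n : ℕ) (X : Type) [MetricSpace X]
    [SecondCountableTopology X] [LocallyCompactSpace X]
    (hdim : ∀ K : Set X, IsCompact K → TopDimLE ↥K n)
    (C : Set X) (ε : ℝ) (hε : 0 < ε)
    (f : X → Fin (2 * n + 1) → ℝ) (hf : Continuous f)
    (r : ℝ) (hr0 : 0 < r) :
    ∃ g : X → Fin (2 * n + 1) → ℝ, Continuous g ∧ rho f g ≤ r ∧
      Delta g C < ENNReal.ofReal ε := by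
  set U : X → Set X := fun c => f ⁻¹' ball (f c) (r / 2) ∩ ball c (ε / 4)
  have hUo : ∀ c, IsOpen (U c) := fun c => (isOpen_ball.preimage hf).inter isOpen_ball
  have hU : ⋃ c, U c = univ := eq_univ_of_forall fun x =>
    mem_iUnion.2 ⟨x, mem_ball_self (half_pos hr0), mem_ball_self (by positivity)⟩
  obtain ⟨T, hTc, hTU⟩ := TopologicalSpace.isOpen_iUnion_countable U hUo
  have : Countable T := hTc.to_subtype
  obtain ⟨V, hVo, hV, hVU, hVord⟩ := exists_shrink_orderLEOn_univ hdim (U := fun c : T => U c)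
    (fun c => hUo c) (by rw [iUnion_coe_set, hTU, hU])
  obtain ⟨ρ, hρV⟩ := PartitionOfUnity.exists_isSubordinate isClosed_univ V hVo hV.ge
  have hρU : ∀ c x, ρ c x ≠ 0 → x ∈ U c := fun c x h => hVU c (hρV c (subset_tsupport _ h))
  obtain ⟨q, hqf, hq⟩ := exists_inGeneralPositionOn_dist_lt (fun c : T => f c) (half_pos hr0)
  refine ⟨fun x => ∑ᶠ c, ρ c x • q c, ρ.continuous_finsum_smul fun _ _ _ => continuousAt_const,
    rho_le_of_forall_dist_le hr0.le fun x => ?_, ?_⟩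
  · refine mem_closedBall'.1 (ρ.finsum_smul_mem_convex (g := fun c _ => q c) (mem_univ x)
      (fun c hc => ?_) (convex_closedBall _ _))
    have hfx : dist (f c) (f x) < r / 2 := by simpa [dist_comm] using (hρU c x hc).1
    exact mem_closedBall.2 (by linarith [dist_triangle (q c) (f c) (f x), hqf c])
  · refine (Delta_le_of_forall_dist_le C fun x y hxy => ?_).trans_lt
      ((ENNReal.ofReal_lt_ofReal_iff hε).2 (half_lt_self hε))
    obtain ⟨c, hx, hy⟩ := ρ.exists_ne_zero_of_finsum_smul_eq hq
      (hVord.mono (fun c => (subset_tsupport _).trans (hρV c)) subset_rfl) (by simp) hxy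
    have := dist_triangle_right x y c
    linarith [mem_ball.1 (hρU c x hx).2, mem_ball.1 (hρU c y hy).2]

/-- `U_ε(C)` is dense: if `X` is a second-countable locally compact metric space whose
compact subspaces all have dimension at most `n ≥ 1`, `∅ ≠ C ⊆ X` is compact, `ε > 0`,
then for every continuous `f : X → ℝ^{2n+1}` and `0 < r < 1` there is a continuous `g`
with `ρ(f,g) ≤ r` and `Δ(g,C) < ε`. -/
theorem statement14 (n : ℕ) (hn : 0 < n) (X : Type) [MetricSpace X]
    [SecondCountableTopology X] [LocallyCompactSpace X]
    (hdim : ∀ K : Set X, IsCompact K → TopDimLE ↥K n)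
    (C : Set X) (hC : IsCompact C) (hCne : C.Nonempty) (ε : ℝ) (hε : 0 < ε)
    (f : X → Fin (2 * n + 1) → ℝ) (hf : Continuous f)
    (r : ℝ) (hr0 : 0 < r) (hr1 : r < 1) :
    ∃ g : X → Fin (2 * n + 1) → ℝ, Continuous g ∧ rho f g ≤ r ∧
      Delta g C < ENNReal.ofReal ε :=
  statement14_general n X hdim C ε hε f hf r hr0
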